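/- Suppose (λ,(U^x)) is a natural left absorber in a Hilbert space tensor category C. Then U^λ ∈ U(H^λ⊗H^λ) is an antimultiplicative unitary: U^λ₁₂U^λ₂₃ = U^λ₂₃U^λ₁₃U^λ₁₂; and for every object x, U^x ∈ U(H^λ⊗H^x) satisfies U^x₂₃U^x₁₃U^λ₁₂ = U^λ₁₂U^x₂₃ (left representation of the antimultiplicative unitary). -/

import Mathlib

/-!
Naturality of `U` along the arrow `Uˣ : λ ⊗ x → λ ⊗ τ(x)` reads
`(1 ⊗ Uˣ) U^{λ ⊗ x} = U^{λ ⊗ τ(x)} (1 ⊗ Uˣ)`. Multiplicativity expands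
`U^{λ ⊗ x} = Uˣ₁₃ U^λ₁₂` and `U^{λ ⊗ τ(x)} = U^{τ(x)}₁₃ U^λ₁₂`, and `U^{τ(x)} = 1`
(again by naturality and multiplicativity), which leaves `Uˣ₂₃ Uˣ₁₃ U^λ₁₂ = U^λ₁₂ Uˣ₂₃`.
For `x = λ` this is antimultiplicativity of `U^λ`.
-/

noncomputable section
open scoped TensorProduct

namespace MU

variable {A B M R : Type*}
  [AddCommMonoid A] [Module ℂ A] [AddCommMonoid B] [Module ℂ B]
  [AddCommMonoid M] [Module ℂ M] [AddCommMonoid R] [Module ℂ R]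

/-- Extend an endomorphism of `A ⊗ B` to `A ⊗ (B ⊗ R)`, acting trivially on the tail `R`.
This realises the leg numbering `T₁₂`. -/
def endTail (T : (A ⊗[ℂ] B) ≃ₗ[ℂ] (A ⊗[ℂ] B)) :
    (A ⊗[ℂ] (B ⊗[ℂ] R)) ≃ₗ[ℂ] (A ⊗[ℂ] (B ⊗[ℂ] R)) :=
  (TensorProduct.assoc ℂ A B R).symm ≪≫ₗ
    TensorProduct.congr T (LinearEquiv.refl ℂ R) ≪≫ₗ TensorProduct.assoc ℂ A B R

/-- Exchange the first tensor factor with the second one. -/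
def exch : (A ⊗[ℂ] (B ⊗[ℂ] M)) ≃ₗ[ℂ] (B ⊗[ℂ] (A ⊗[ℂ] M)) :=
  (TensorProduct.assoc ℂ A B M).symm ≪≫ₗ
    TensorProduct.congr (TensorProduct.comm ℂ A B) (LinearEquiv.refl ℂ M) ≪≫ₗ
    TensorProduct.assoc ℂ B A M

/-- Let an endomorphism of `A ⊗ M` act on `A ⊗ (B ⊗ M)`, skipping the middle leg `B`. -/
def stepMid (T : (A ⊗[ℂ] M) ≃ₗ[ℂ] (A ⊗[ℂ] M)) :
    (A ⊗[ℂ] (B ⊗[ℂ] M)) ≃ₗ[ℂ] (A ⊗[ℂ] (B ⊗[ℂ] M)) :=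
  exch ≪≫ₗ TensorProduct.congr (LinearEquiv.refl ℂ B) T ≪≫ₗ exch

/-- Let an endomorphism of `M` act on `A ⊗ M`, acting trivially on the new leftmost leg. -/
def extL (T : M ≃ₗ[ℂ] M) : (A ⊗[ℂ] M) ≃ₗ[ℂ] (A ⊗[ℂ] M) :=
  TensorProduct.congr (LinearEquiv.refl ℂ A) T

end MU

universe u

/-- A (strict) Hilbert space tensor category, encoded concretely: objects are
ℂ-modules equipped with an extra structure `S`, arrows are the linear maps
satisfying the predicate `IsHom`, the monoidal structure is induced by the tensor
product of the underlying spaces (so the forgetful functor is strict monoidal), and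
`triv` is the strict monoidal section `τ` equipping a space with the trivial
structure (every linear map is an arrow between trivial objects). -/
structure HSTC : Type (u + 1) where
  /-- the extra structure making a ℂ-module into an object of the category -/
  S : ∀ (X : Type u) [AddCommGroup X] [Module ℂ X], Type u
  /-- the arrows of the category, as a predicate on linear maps -/
  IsHom : ∀ {X Y : Type u} [AddCommGroup X] [Module ℂ X] [AddCommGroup Y] [Module ℂ Y],
    S X → S Y → (X →ₗ[ℂ] Y) → Prop
  isHom_id : ∀ {X : Type u} [AddCommGroup X] [Module ℂ X] (s : S X),
    IsHom s s LinearMap.id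
  isHom_comp : ∀ {X Y Z : Type u} [AddCommGroup X] [Module ℂ X] [AddCommGroup Y]
    [Module ℂ Y] [AddCommGroup Z] [Module ℂ Z] (s : S X) (t : S Y) (u : S Z)
    (f : X →ₗ[ℂ] Y) (g : Y →ₗ[ℂ] Z), IsHom s t f → IsHom t u g → IsHom s u (g ∘ₗ f)
  /-- the tensor product of objects -/
  tenS : ∀ {X Y : Type u} [AddCommGroup X] [Module ℂ X] [AddCommGroup Y] [Module ℂ Y],
    S X → S Y → S (X ⊗[ℂ] Y)
  /-- the trivial structure: the strict monoidal functor `τ : Hilb → C` -/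
  triv : ∀ (X : Type u) [AddCommGroup X] [Module ℂ X], S X
  /-- every bounded linear map is an arrow between trivial objects -/
  triv_isHom : ∀ {X Y : Type u} [AddCommGroup X] [Module ℂ X] [AddCommGroup Y]
    [Module ℂ Y] (f : X →ₗ[ℂ] Y), IsHom (triv X) (triv Y) f
  /-- the tensor product of arrows is an arrow -/
  ten_isHom : ∀ {X X' Y Y' : Type u} [AddCommGroup X] [Module ℂ X] [AddCommGroup X']
    [Module ℂ X'] [AddCommGroup Y] [Module ℂ Y] [AddCommGroup Y'] [Module ℂ Y']
    (s : S X) (s' : S X') (t : S Y) (t' : S Y') (f : X →ₗ[ℂ] X') (g : Y →ₗ[ℂ] Y'),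
    IsHom s s' f → IsHom t t' g → IsHom (tenS s t) (tenS s' t') (TensorProduct.map f g)
  /-- `τ` is a strict tensor functor -/
  triv_tenS : ∀ (X Y : Type u) [AddCommGroup X] [Module ℂ X] [AddCommGroup Y]
    [Module ℂ Y], tenS (triv X) (triv Y) = triv (X ⊗[ℂ] Y)
  /-- the associators of the category are mapped to the canonical ones -/
  assoc_isHom : ∀ {X Y Z : Type u} [AddCommGroup X] [Module ℂ X] [AddCommGroup Y]
    [Module ℂ Y] [AddCommGroup Z] [Module ℂ Z] (s : S X) (t : S Y) (u : S Z),
    IsHom (tenS (tenS s t) u) (tenS s (tenS t u))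
      (TensorProduct.assoc ℂ X Y Z).toLinearMap
  assoc_symm_isHom : ∀ {X Y Z : Type u} [AddCommGroup X] [Module ℂ X] [AddCommGroup Y]
    [Module ℂ Y] [AddCommGroup Z] [Module ℂ Z] (s : S X) (t : S Y) (u : S Z),
    IsHom (tenS s (tenS t u)) (tenS (tenS s t) u)
      ((TensorProduct.assoc ℂ X Y Z).symm : X ⊗[ℂ] (Y ⊗[ℂ] Z) →ₗ[ℂ] (X ⊗[ℂ] Y) ⊗[ℂ] Z)
  /-- the flip over a trivial object comes from an arrow (Lemma 2.5 of the paper) -/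
  flip_triv_isHom : ∀ {X Y : Type u} [AddCommGroup X] [Module ℂ X] [AddCommGroup Y]
    [Module ℂ Y] (s : S X),
    IsHom (tenS s (triv Y)) (tenS (triv Y) s) (TensorProduct.comm ℂ X Y).toLinearMap

/-- A natural left absorber `(λ, (Uˣ)ₓ)` in a Hilbert space tensor category `C`:
unitaries `Uˣ : λ ⊗ x → λ ⊗ τ(x)` (described on the underlying spaces `Λ ⊗ X`),
natural in `x`, and antimultiplicative: `U^{x₁ ⊗ x₂} = U^{x₂}₁₃ U^{x₁}₁₂`. -/
structure NLA (C : HSTC.{u}) (Λ : Type u) [AddCommGroup Λ] [Module ℂ Λ] where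
  /-- the structure of the absorbing object `λ` on the space `Λ` -/
  slam : C.S Λ
  /-- the absorbing unitaries `Uˣ`, at the level of the underlying spaces -/
  U : ∀ (X : Type u) [AddCommGroup X] [Module ℂ X], C.S X →
    ((Λ ⊗[ℂ] X) ≃ₗ[ℂ] (Λ ⊗[ℂ] X))
  /-- each `Uˣ` is an arrow `λ ⊗ x → λ ⊗ τ(x)` in `C` -/
  U_isHom : ∀ (X : Type u) [AddCommGroup X] [Module ℂ X] (s : C.S X),
    C.IsHom (C.tenS slam s) (C.tenS slam (C.triv X)) (U X s).toLinearMap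
  /-- naturality of the `Uˣ` -/
  U_natural : ∀ {X Y : Type u} [AddCommGroup X] [Module ℂ X] [AddCommGroup Y]
    [Module ℂ Y] (s : C.S X) (t : C.S Y) (a : X →ₗ[ℂ] Y), C.IsHom s t a →
    TensorProduct.map LinearMap.id a ∘ₗ (U X s).toLinearMap
      = (U Y t).toLinearMap ∘ₗ TensorProduct.map LinearMap.id a
  /-- multiplicativity: `U^{x₁ ⊗ x₂} = U^{x₂}₁₃ U^{x₁}₁₂` -/
  U_mult : ∀ (X Y : Type u) [AddCommGroup X] [Module ℂ X] [AddCommGroup Y]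
    [Module ℂ Y] (s : C.S X) (t : C.S Y),
    U (X ⊗[ℂ] Y) (C.tenS s t)
      = MU.endTail (U X s) ≪≫ₗ MU.stepMid (U Y t)

namespace MU

open TensorProduct

variable {A B M R : Type*}
  [AddCommMonoid A] [Module ℂ A] [AddCommMonoid B] [Module ℂ B]
  [AddCommMonoid M] [Module ℂ M] [AddCommMonoid R] [Module ℂ R]

@[simp] lemma exch_tmul (a : A) (b : B) (m : M) :
    (exch (a ⊗ₜ[ℂ] (b ⊗ₜ[ℂ] m)) : B ⊗[ℂ] (A ⊗[ℂ] M)) = b ⊗ₜ (a ⊗ₜ m) := by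
  simp [exch]

@[simp] lemma exch_exch (z : A ⊗[ℂ] (B ⊗[ℂ] M)) : exch (exch z) = z := by
  have h : (exch.trans exch : (A ⊗[ℂ] (B ⊗[ℂ] M)) ≃ₗ[ℂ] _).toLinearMap = LinearMap.id :=
    ext_threefold' fun a b m => by simp
  exact LinearMap.congr_fun h z

@[simp] lemma endTail_assoc_tmul (T : (A ⊗[ℂ] B) ≃ₗ[ℂ] (A ⊗[ℂ] B)) (ζ : A ⊗[ℂ] B) (r : R) :
    endTail T (TensorProduct.assoc ℂ A B R (ζ ⊗ₜ r))
      = TensorProduct.assoc ℂ A B R (T ζ ⊗ₜ r) := by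
  simp [endTail]

@[simp] lemma stepMid_tmul (T : (A ⊗[ℂ] M) ≃ₗ[ℂ] (A ⊗[ℂ] M)) (a : A) (b : B) (m : M) :
    stepMid T (a ⊗ₜ[ℂ] (b ⊗ₜ[ℂ] m)) = exch (b ⊗ₜ T (a ⊗ₜ m)) := by
  simp [stepMid]

@[simp] lemma stepMid_refl :
    stepMid (LinearEquiv.refl ℂ (A ⊗[ℂ] M)) = LinearEquiv.refl ℂ (A ⊗[ℂ] (B ⊗[ℂ] M)) := by
  ext z
  simp [stepMid]

lemma map_id_flip_mk (ζ : A ⊗[ℂ] B) (r : R) :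
    map LinearMap.id ((mk ℂ B R).flip r) ζ = TensorProduct.assoc ℂ A B R (ζ ⊗ₜ r) := by
  induction ζ using TensorProduct.induction_on with
  | zero => simp
  | tmul a b => simp
  | add ζ₁ ζ₂ h₁ h₂ => simp [h₁, h₂, add_tmul]

lemma up_one_tmul_injective :
    Function.Injective fun m : M => (ULift.up (1 : ℂ) : ULift ℂ) ⊗ₜ[ℂ] m := by
  intro m m' h
  simpa using
    congrArg (TensorProduct.lid ℂ M ∘ map ULift.moduleEquiv.toLinearMap LinearMap.id) h

/-- `V ∈ U(A ⊗ M)` is a left representation of `W ∈ U(A ⊗ A)`: `V₂₃ V₁₃ W₁₂ = W₁₂ V₂₃`.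
Antimultiplicativity of `W` is the case `V = W`. -/
def IsLeftRep (W : (A ⊗[ℂ] A) ≃ₗ[ℂ] (A ⊗[ℂ] A)) (V : (A ⊗[ℂ] M) ≃ₗ[ℂ] (A ⊗[ℂ] M)) : Prop :=
  extL V * stepMid V * endTail W = endTail W * extL V

end MU

namespace NLA

open MU TensorProduct

variable {C : HSTC.{u}} {Λ : Type u} [AddCommGroup Λ] [Module ℂ Λ] (B : NLA C Λ)

/-- Naturality along `c ↦ c ⊗ w : 𝟙 → 𝟙 ⊗ τ(y)`, together with
`U^{𝟙 ⊗ τ(y)} = U^{τ(y)}₁₃ U^𝟙₁₂`, shows that `U^{τ(y)}₁₃` fixes every `η ⊗ w`, since `U^𝟙` is onto. -/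
lemma U_triv (Y : Type u) [AddCommGroup Y] [Module ℂ Y] :
    B.U Y (C.triv Y) = LinearEquiv.refl ℂ (Λ ⊗[ℂ] Y) := by
  refine LinearEquiv.toLinearMap_injective <| TensorProduct.ext' fun l w => ?_
  let X := ULift.{u} ℂ
  let a : X →ₗ[ℂ] X ⊗[ℂ] Y := (TensorProduct.mk ℂ X Y).flip w
  have hnat := B.U_natural (C.triv X) (C.triv (X ⊗[ℂ] Y)) a (C.triv_isHom a)
  rw [← C.triv_tenS X Y, B.U_mult X Y (C.triv X) (C.triv Y)] at hnat
  have hfix : ∀ η : Λ ⊗[ℂ] X,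
      stepMid (B.U Y (C.triv Y)) (TensorProduct.assoc ℂ Λ X Y (η ⊗ₜ w))
        = TensorProduct.assoc ℂ Λ X Y (η ⊗ₜ w) := fun η => by
    simpa [a, map_id_flip_mk] using (LinearMap.congr_fun hnat ((B.U X (C.triv X)).symm η)).symm
  have h := congrArg exch (hfix (l ⊗ₜ ULift.up 1))
  simp only [TensorProduct.assoc_tmul, stepMid_tmul, exch_exch, exch_tmul] at h
  simpa using up_one_tmul_injective h

lemma isLeftRep_U (X : Type u) [AddCommGroup X] [Module ℂ X] (s : C.S X) :
    IsLeftRep (B.U Λ B.slam) (B.U X s) := by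
  have hnat := B.U_natural _ _ _ (B.U_isHom X s)
  rw [B.U_mult, B.U_mult, U_triv, stepMid_refl, LinearEquiv.trans_refl] at hnat
  exact LinearEquiv.toLinearMap_injective hnat

end NLA

open MU in
/-- for a natural left absorber `(λ, U)` in a Hilbert space tensor
category, `U^λ` is an antimultiplicative unitary:
`U^λ₁₂ U^λ₂₃ = U^λ₂₃ U^λ₁₃ U^λ₁₂` on `H^λ ⊗ H^λ ⊗ H^λ`; and every `Uˣ` is a left
representation of it: `Uˣ₂₃ Uˣ₁₃ U^λ₁₂ = U^λ₁₂ Uˣ₂₃` on `H^λ ⊗ H^λ ⊗ Hˣ`. -/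
theorem left_absorber_antimultiplicative
    (C : HSTC.{u}) {Λ : Type u} [AddCommGroup Λ] [Module ℂ Λ] (B : NLA C Λ) :
    letI Ul : (Λ ⊗[ℂ] Λ) ≃ₗ[ℂ] (Λ ⊗[ℂ] Λ) := B.U Λ B.slam
    (endTail Ul * extL Ul = extL Ul * stepMid Ul * endTail Ul)
    ∧ (∀ (X : Type u) [AddCommGroup X] [Module ℂ X] (s : C.S X),
        extL (B.U X s) * stepMid (B.U X s) * endTail Ul
          = endTail Ul * extL (B.U X s)) := by
  exact ⟨Eq.symm (B.isLeftRep_U Λ B.slam), fun X _ _ s => B.isLeftRep_U X s⟩
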